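/- Let φ : Σ → (−∞,0) and ψ : Σ → (0,∞) be locally Hölder, suppose the limit α_lim exists with 0 < α_lim < ∞, and suppose t_∞ is finite. Then for every q ∈ ℝ, t̃(q) = −α_lim·q + t_∞; in particular t̃ is a strictly decreasing affine function of q. -/

import Mathlib

/-!
Since `φ(ī)/ψ(ī) → -α_lim` and both potentials have bounded first variation, comparing `x` with
the constant sequence on its first symbol gives `|φ + α_lim ψ| ≤ ε ψ + K_ε` for every `ε > 0`.
Hence `qφ - tψ` and `-(t + α_lim q)ψ` differ by at most `εψ` plus a constant, and a bounded
perturbation `f ≤ g + K` changes the pressure by at most `K`. So `P(qφ - tψ)` is finite for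
`t > t_∞ - α_lim q` and infinite for `t < t_∞ - α_lim q`.
-/

open Filter MeasureTheory Set Topology
open scoped ENNReal NNReal

namespace CMS

/-- The discrete σ-algebra on the alphabet of positive integers. -/
instance : MeasurableSpace ℕ+ := ⊤

/-- The full shift `ℕ^ℕ` on the alphabet of positive integers. -/
abbrev ShiftSpace : Type := ℕ → ℕ+

/-- The left shift map `(σx)ᵢ = x_{i+1}`. -/
def shift (x : ShiftSpace) : ShiftSpace := fun i => x (i + 1)

/-- The word formed by the first `n` symbols of `x`. -/
def word (x : ShiftSpace) (n : ℕ) : List ℕ+ := List.ofFn fun i : Fin n => x i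

/-- The cylinder set determined by a word. -/
def cylinder (w : List ℕ+) : Set ShiftSpace :=
  {y | ∀ i : Fin w.length, y i = w.get i}

/-- Birkhoff sum `Σ_{i<n} f(σⁱ x)`. -/
def birkhoff (f : ShiftSpace → ℝ) (n : ℕ) (x : ShiftSpace) : ℝ :=
  ∑ i ∈ Finset.range n, f (shift^[i] x)

/-- `f` is locally Hölder: `Vₙ(f) ≤ C θⁿ` for all `n ≥ 1`. -/
def LocHolder (f : ShiftSpace → ℝ) : Prop :=
  ∃ C : ℝ, 0 < C ∧ ∃ θ : ℝ, θ ∈ Set.Ioo (0:ℝ) 1 ∧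
    ∀ n : ℕ, 1 ≤ n → ∀ w : List ℕ+, w.length = n →
      ∀ x ∈ cylinder w, ∀ y ∈ cylinder w, |f x - f y| ≤ C * θ ^ n

/-- The `n`-th partition function `Zₙ(f)`, valued in `ℝ≥0∞`
(using `exp (sup ...) = sup (exp ...)`). -/
noncomputable def Zfun (n : ℕ) (f : ShiftSpace → ℝ) : ℝ≥0∞ :=
  ∑' w : {w : List ℕ+ // w.length = n},
    ⨆ y ∈ cylinder w.1, ENNReal.ofReal (Real.exp (birkhoff f n y))

/-- The logarithm `ℝ≥0∞ → EReal`. -/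
noncomputable def elog (x : ℝ≥0∞) : EReal :=
  if x = 0 then ⊥ else if x = ⊤ then ⊤ else ((Real.log x.toReal : ℝ) : EReal)

/-- Topological pressure `P(f) = lim (1/n) log Zₙ(f) ∈ [-∞,∞]`
(formalised via `limsup`). -/
noncomputable def pressure (f : ShiftSpace → ℝ) : EReal :=
  Filter.limsup (fun n : ℕ => (((n : ℝ)⁻¹ : ℝ) : EReal) * elog (Zfun n f)) Filter.atTop

/-- The temperature function `T(q) = inf {t | P(qφ - tψ) ≤ 0}`. -/
noncomputable def Tfun (φ ψ : ShiftSpace → ℝ) (q : ℝ) : ℝ :=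
  sInf {t : ℝ | pressure (fun x => q * φ x - t * ψ x) ≤ 0}

/-- `t̃(q) = inf {t | P(qφ - tψ) < ∞}`. -/
noncomputable def ttilde (φ ψ : ShiftSpace → ℝ) (q : ℝ) : ℝ :=
  sInf {t : ℝ | pressure (fun x => q * φ x - t * ψ x) < ⊤}

/-- `Q = {q | T(q) = t̃(q)}`. -/
def Qset (φ ψ : ShiftSpace → ℝ) : Set ℝ := {q | Tfun φ ψ q = ttilde φ ψ q}

/-- The set `{t | P(-tψ) < ∞}` whose infimum is `t_∞`. -/
def tinfSet (ψ : ShiftSpace → ℝ) : Set ℝ := {t | pressure (fun x => -(t * ψ x)) < ⊤}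

/-- `t_∞ = inf {t | P(-tψ) < ∞}`. -/
noncomputable def tinfty (ψ : ShiftSpace → ℝ) : ℝ := sInf (tinfSet ψ)

/-- The constant sequence `ī = (i,i,...)`. -/
def constSeq (i : ℕ+) : ShiftSpace := fun _ => i

/-- `μ` is a (σ-invariant probability) Gibbs measure for `f`. -/
def IsGibbs (f : ShiftSpace → ℝ) (μ : Measure ShiftSpace) : Prop :=
  IsProbabilityMeasure μ ∧ μ.map shift = μ ∧
  ∃ P : ℝ, pressure f = ((P : ℝ) : EReal) ∧
    ∃ M : ℝ, 1 ≤ M ∧ ∀ n : ℕ, 1 ≤ n → ∀ w : List ℕ+, w.length = n → ∀ x ∈ cylinder w,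
      ENNReal.ofReal (M⁻¹ * Real.exp (-(n : ℝ) * P + birkhoff f n x)) ≤ μ (cylinder w) ∧
      μ (cylinder w) ≤ ENNReal.ofReal (M * Real.exp (-(n : ℝ) * P + birkhoff f n x))

/-- Diameter with respect to an explicitly given metric on the shift space. -/
noncomputable def diam' (m : MetricSpace ShiftSpace) (s : Set ShiftSpace) : ℝ :=
  @Metric.diam _ m.toPseudoMetricSpace s

/-- Ball with respect to an explicitly given metric on the shift space. -/
def ball' (m : MetricSpace ShiftSpace) (x : ShiftSpace) (r : ℝ) : Set ShiftSpace :=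
  @Metric.ball _ m.toPseudoMetricSpace x r

/-- Distance function of an explicitly given metric. -/
noncomputable def dist' (m : MetricSpace ShiftSpace) : ShiftSpace → ShiftSpace → ℝ :=
  @dist _ m.toPseudoMetricSpace.toDist

/-- The given metric induces the product topology on `ℕ^ℕ`. -/
def compatibleTopology (m : MetricSpace ShiftSpace) : Prop :=
  m.toPseudoMetricSpace.toUniformSpace.toTopologicalSpace
    = (inferInstance : TopologicalSpace ShiftSpace)

/-- `ψ` is a metric potential for the metric `m`. -/
def IsMetricPotential (m : MetricSpace ShiftSpace) (ψ : ShiftSpace → ℝ) : Prop :=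
  LocHolder ψ ∧ (∀ x, 0 < ψ x) ∧
  ∃ C : ℝ, 0 < C ∧ ∀ x : ShiftSpace, ∀ n : ℕ, 1 ≤ n →
    C⁻¹ * ∏ j ∈ Finset.range n, Real.exp (-ψ (shift^[j] x)) ≤ diam' m (cylinder (word x n)) ∧
    diam' m (cylinder (word x n)) ≤ C * ∏ j ∈ Finset.range n, Real.exp (-ψ (shift^[j] x))

/-- Hausdorff dimension in `(Σ, d)` for an explicitly given metric. -/
noncomputable def dimH' (m : MetricSpace ShiftSpace) (s : Set ShiftSpace) : ℝ≥0∞ :=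
  @dimH _ (@MetricSpace.toEMetricSpace _ m) s

/-- `x` has symbolic dimension `a` w.r.t. the Gibbs measure `μ` and metric `m`. -/
def HasSymbDim (m : MetricSpace ShiftSpace) (μ : Measure ShiftSpace) (x : ShiftSpace)
    (a : ℝ) : Prop :=
  Tendsto (fun n : ℕ => Real.log ((μ (cylinder (word x n))).toReal)
      / Real.log (diam' m (cylinder (word x n)))) atTop (nhds a)

/-- The level set `X_α^s`. -/
def Xs (m : MetricSpace ShiftSpace) (μ : Measure ShiftSpace) (a : ℝ) : Set ShiftSpace :=
  {x | HasSymbDim m μ x a}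

/-- The multifractal spectrum `f_μ(α) = dim_H X_α^s`. -/
noncomputable def mfSpectrum (m : MetricSpace ShiftSpace) (μ : Measure ShiftSpace) (a : ℝ) : ℝ :=
  (dimH' m (Xs m μ a)).toReal

/-- `φ` and `ψ` are non-cohomologous (in the class of locally Hölder functions). -/
def NonCohomologous (φ ψ : ShiftSpace → ℝ) : Prop :=
  ¬ ∃ u : ShiftSpace → ℝ, LocHolder u ∧ ∀ x, φ x - ψ x = u x - u (shift x)

/-! ### The Gauss map -/

/-- The Gauss map `G(x) = 1/x mod 1`. -/
noncomputable def gauss (x : ℝ) : ℝ := Int.fract x⁻¹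

/-- The inverse branch `G_b(x) = 1/(x+b)`. -/
noncomputable def gaussInv (b : ℕ+) (x : ℝ) : ℝ := 1 / (x + ((b : ℕ) : ℝ))

/-- The continued-fraction cylinder `Δ(a₁,…,aₙ) = G_{a₁}∘⋯∘G_{aₙ}((0,1))`. -/
noncomputable def gaussCyl (L : List ℕ+) : Set ℝ :=
  (L.foldr (fun b f => gaussInv b ∘ f) id) '' Set.Ioo (0:ℝ) 1

/-- The continued-fraction digits: `a_{i+1}(x) = ⌊1/(Gⁱx)⌋` (junk value `1` otherwise). -/
noncomputable def cfDigit (x : ℝ) (i : ℕ) : ℕ+ :=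
  if h : 0 < ⌊(gauss^[i] x)⁻¹⌋ then ⟨(⌊(gauss^[i] x)⁻¹⌋).toNat, by omega⟩ else 1

/-- The value of a finite continued fraction `[a₁,…,aₙ]`. -/
noncomputable def cfValList (L : List ℕ+) : ℝ :=
  L.foldr (fun a r => 1 / (((a : ℕ) : ℝ) + r)) 0

/-- The coding map `π : Σ → [0,1]`, sending a digit sequence to the value of its
continued fraction (as a limit of the finite truncations). -/
noncomputable def codingMap (x : ShiftSpace) : ℝ :=
  limUnder Filter.atTop fun n => cfValList (word x n)

/-- The Gauss geometric potential `ψ(x) = log |G'(π x)|`. -/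
noncomputable def gaussPsi (x : ShiftSpace) : ℝ := Real.log |deriv gauss (codingMap x)|

/-- Index of first disagreement of two distinct sequences. -/
def firstDiff (x y : ShiftSpace) (h : x ≠ y) : ℕ :=
  Nat.find (p := fun i => x i ≠ y i)
    (by
      by_contra hc
      exact h (funext fun i => by by_contra hne; exact hc ⟨i, hne⟩))

/-- `m` is the metric on `Σ` defined from the Gauss cylinders:
`d(x,y) = diam Δ(x₁,…,x_k)` with `k` the longest common initial block
(and `d(x,y) = 1` if `x₁ ≠ y₁`). -/
def IsGaussMetric (m : MetricSpace ShiftSpace) : Prop :=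
  ∀ x y : ShiftSpace, ∀ h : x ≠ y,
    dist' m x y =
      if x 0 = y 0 then Metric.diam (gaussCyl (word x (firstDiff x y h))) else 1

theorem elog_eq_log : elog = ENNReal.log := rfl

theorem birkhoff_le_add_of_le_add {f g : ShiftSpace → ℝ} {K : ℝ} (h : ∀ x, f x ≤ g x + K)
    (n : ℕ) (x : ShiftSpace) : birkhoff f n x ≤ birkhoff g n x + n * K := by
  simpa [birkhoff, Finset.sum_add_distrib, mul_comm] using
    Finset.sum_le_sum fun i (_ : i ∈ Finset.range n) => h (shift^[i] x)

theorem Zfun_le_of_le_add {f g : ShiftSpace → ℝ} {K : ℝ} (h : ∀ x, f x ≤ g x + K) (n : ℕ) :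
    Zfun n f ≤ ENNReal.ofReal (Real.exp (n * K)) * Zfun n g := by
  rw [Zfun, Zfun, ← ENNReal.tsum_mul_left]
  refine ENNReal.tsum_le_tsum fun w => iSup₂_le fun y hy => ?_
  calc ENNReal.ofReal (Real.exp (birkhoff f n y))
      ≤ ENNReal.ofReal (Real.exp (n * K) * Real.exp (birkhoff g n y)) := by
        rw [← Real.exp_add]
        gcongr
        linarith [birkhoff_le_add_of_le_add h n y]
    _ = ENNReal.ofReal (Real.exp (n * K)) * ENNReal.ofReal (Real.exp (birkhoff g n y)) :=
        ENNReal.ofReal_mul (Real.exp_nonneg _)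
    _ ≤ ENNReal.ofReal (Real.exp (n * K)) *
          ⨆ y ∈ cylinder w.1, ENNReal.ofReal (Real.exp (birkhoff g n y)) := by
        gcongr
        exact le_iSup₂_of_le (f := fun y (_ : y ∈ cylinder w.1) =>
          ENNReal.ofReal (Real.exp (birkhoff g n y))) y hy le_rfl

theorem pressure_le_add_of_le_add {f g : ShiftSpace → ℝ} {K : ℝ} (h : ∀ x, f x ≤ g x + K) :
    pressure f ≤ pressure g + K := by
  have hn : ∀ n : ℕ, 1 ≤ n → (((n : ℝ)⁻¹ : ℝ) : EReal) * elog (Zfun n f)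
      ≤ (K : EReal) + (((n : ℝ)⁻¹ : ℝ) : EReal) * elog (Zfun n g) := by
    intro n hn
    have hn₀ : (0 : ℝ) < (n : ℝ)⁻¹ := by positivity
    have hlog : elog (Zfun n f) ≤ (((n : ℝ) * K : ℝ) : EReal) + elog (Zfun n g) := by
      rw [elog_eq_log, ← Real.log_exp (n * K), ← ENNReal.log_ofReal_of_pos (Real.exp_pos _),
        ← ENNReal.log_mul_add]
      exact ENNReal.log_monotone (Zfun_le_of_le_add h n)
    calc (((n : ℝ)⁻¹ : ℝ) : EReal) * elog (Zfun n f)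
        ≤ (((n : ℝ)⁻¹ : ℝ) : EReal) * ((((n : ℝ) * K : ℝ) : EReal) + elog (Zfun n g)) :=
          mul_le_mul_of_nonneg_left hlog (EReal.coe_nonneg.2 hn₀.le)
      _ = (K : EReal) + (((n : ℝ)⁻¹ : ℝ) : EReal) * elog (Zfun n g) := by
          rw [EReal.left_distrib_of_nonneg_of_ne_top (EReal.coe_nonneg.2 hn₀.le)
            (EReal.coe_ne_top _), ← EReal.coe_mul, inv_mul_cancel_left₀ (by positivity)]
  calc pressure f
      ≤ limsup (fun n : ℕ => (K : EReal) + (((n : ℝ)⁻¹ : ℝ) : EReal) * elog (Zfun n g)) atTop :=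
        limsup_le_limsup ((eventually_ge_atTop 1).mono hn)
    _ ≤ limsup (fun _ : ℕ => (K : EReal)) atTop + pressure g :=
        EReal.limsup_add_le (.inl (by simp)) (.inl (by simp))
    _ = pressure g + K := by rw [limsup_const, add_comm]

theorem pressure_lt_top_of_le_add {f g : ShiftSpace → ℝ} {K : ℝ} (h : ∀ x, f x ≤ g x + K)
    (hg : pressure g < ⊤) : pressure f < ⊤ :=
  (pressure_le_add_of_le_add h).trans_lt (EReal.add_lt_top hg.ne (EReal.coe_ne_top K))

theorem mem_cylinder_word_one {x y : ShiftSpace} (h : y 0 = x 0) : y ∈ cylinder (word x 1) := by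
  rintro ⟨i, hi⟩
  simp only [word, List.length_ofFn] at hi
  obtain rfl : i = 0 := by omega
  simpa [word] using h

theorem LocHolder.exists_abs_sub_constSeq_le {f : ShiftSpace → ℝ} (hf : LocHolder f) :
    ∃ B, ∀ x, |f x - f (constSeq (x 0))| ≤ B := by
  obtain ⟨C, -, θ, -, hf⟩ := hf
  exact ⟨C * θ, fun x => by
    simpa using hf 1 le_rfl (word x 1) (by simp [word]) x (mem_cylinder_word_one rfl)
      (constSeq (x 0)) (mem_cylinder_word_one rfl)⟩

theorem exists_forall_le_of_eventually_le {ι : Type*} [LinearOrder ι] [LocallyFiniteOrderBot ι]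
    [Nonempty ι] {w : ι → ℝ} {a : ℝ} (h : ∀ᶠ i in atTop, w i ≤ a) : ∃ K, ∀ i, w i ≤ K := by
  obtain ⟨N, hN⟩ := eventually_atTop.1 h
  have hcofinite : ∀ᶠ i in cofinite, w i ≤ a :=
    eventually_cofinite.2 ((finite_Iio N).subset fun i hi => not_le.1 fun hNi => hi (hN i hNi))
  obtain ⟨K, hK⟩ := (isBoundedUnder_of_eventually_le hcofinite).bddAbove_range_of_cofinite
  exact ⟨K, fun i => hK (mem_range_self i)⟩

/-- `u = o(ψ) + O(1)`, uniformly. -/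
def IsNegligible {X : Type*} (ψ u : X → ℝ) : Prop :=
  ∀ ε > 0, ∃ K, ∀ x, |u x| ≤ ε * ψ x + K

theorem IsNegligible.const_mul {X : Type*} {ψ u : X → ℝ} (hu : IsNegligible ψ u) (q : ℝ) :
    IsNegligible ψ (fun x => q * u x) := by
  intro ε hε
  obtain ⟨K, hK⟩ := hu (ε / (|q| + 1)) (by positivity)
  refine ⟨(|q| + 1) * K, fun x => ?_⟩
  calc |q * u x| ≤ (|q| + 1) * |u x| := by
        rw [abs_mul]; gcongr; linarith
    _ ≤ (|q| + 1) * (ε / (|q| + 1) * ψ x + K) := by gcongr; exact hK x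
    _ = ε * ψ x + (|q| + 1) * K := by field_simp

theorem exists_abs_add_mul_le_of_tendsto_div {ι : Type*} [LinearOrder ι]
    [LocallyFiniteOrderBot ι] [Nonempty ι] {u v : ι → ℝ} (hv : ∀ i, 0 < v i) {α : ℝ}
    (h : Tendsto (fun i => u i / -v i) atTop (𝓝 α)) {ε : ℝ} (hε : 0 < ε) :
    ∃ K, ∀ i, |u i + α * v i| ≤ ε * v i + K := by
  have hsmall : ∀ᶠ i in atTop, |u i + α * v i| - ε * v i ≤ 0 := by
    filter_upwards [Metric.tendsto_nhds.1 h ε hε] with i hi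
    have hscale : |u i + α * v i| = |u i / -v i - α| * v i := by
      have hv₀ := (hv i).ne'
      have hsum : u i + α * v i = -((u i / -v i - α) * v i) := by field_simp; ring
      rw [hsum, abs_neg, abs_mul, abs_of_pos (hv i)]
    rw [Real.dist_eq] at hi
    nlinarith [hv i]
  obtain ⟨K, hK⟩ := exists_forall_le_of_eventually_le hsmall
  exact ⟨K, fun i => by linarith [hK i]⟩

theorem isNegligible_add_mul {φ ψ : ShiftSpace → ℝ} (hφ : LocHolder φ) (hψ : LocHolder ψ)
    (hψpos : ∀ x, 0 < ψ x) {α : ℝ}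
    (hα : Tendsto (fun i : ℕ+ => φ (constSeq i) / (-ψ (constSeq i))) atTop (𝓝 α)) :
    IsNegligible ψ (fun x => φ x + α * ψ x) := by
  intro ε hε
  obtain ⟨Bφ, hBφ⟩ := hφ.exists_abs_sub_constSeq_le
  obtain ⟨Bψ, hBψ⟩ := hψ.exists_abs_sub_constSeq_le
  obtain ⟨K, hK⟩ := exists_abs_add_mul_le_of_tendsto_div (fun i => hψpos (constSeq i)) hα hε
  refine ⟨K + Bφ + |α| * Bψ + ε * Bψ, fun x => ?_⟩
  set c := constSeq (x 0)
  have hψc : ψ c ≤ ψ x + Bψ := by linarith [(abs_le.1 (hBψ x)).1]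
  calc |φ x + α * ψ x| = |(φ c + α * ψ c) + (φ x - φ c) + α * (ψ x - ψ c)| := by ring_nf
    _ ≤ |φ c + α * ψ c| + |φ x - φ c| + |α| * |ψ x - ψ c| := by
        rw [← abs_mul]; exact abs_add_three _ _ _
    _ ≤ ε * ψ c + K + Bφ + |α| * Bψ := by gcongr; exacts [hK (x 0), hBφ x, hBψ x]
    _ ≤ ε * ψ x + (K + Bφ + |α| * Bψ + ε * Bψ) := by
        linarith [mul_le_mul_of_nonneg_left hψc hε.le]

theorem csInf_eq_csInf_add {S T : Set ℝ} {c : ℝ} (hT : T.Nonempty) (hTb : BddBelow T)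
    (hTS : ∀ t ∈ T, ∀ δ > 0, t + c + δ ∈ S) (hST : ∀ s ∈ S, ∀ δ > 0, s - c + δ ∈ T) :
    sInf S = sInf T + c := by
  have hlb : ∀ s ∈ S, sInf T + c ≤ s := fun s hs => by
    linarith [le_of_forall_pos_le_add fun δ hδ => csInf_le hTb (hST s hs δ hδ)]
  obtain ⟨t, ht⟩ := hT
  refine le_antisymm (le_of_forall_pos_le_add fun δ hδ => ?_)
    (le_csInf ⟨t + c + 1, hTS t ht 1 one_pos⟩ hlb)
  obtain ⟨t', ht', hlt⟩ := exists_lt_of_csInf_lt ⟨t, ht⟩ (lt_add_of_pos_right _ (half_pos hδ))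
  calc sInf S ≤ t' + c + δ / 2 := csInf_le ⟨_, hlb⟩ (hTS t' ht' _ (half_pos hδ))
    _ ≤ sInf T + c + δ := by linarith

theorem sInf_pressure_sub_mul_eq {ψ f : ShiftSpace → ℝ} {a : ℝ} (htinf₁ : (tinfSet ψ).Nonempty)
    (htinf₂ : BddBelow (tinfSet ψ)) (hf : IsNegligible ψ (fun x => f x - a * ψ x)) :
    sInf {t | pressure (fun x => f x - t * ψ x) < ⊤} = tinfty ψ + a := by
  refine csInf_eq_csInf_add htinf₁ htinf₂ (fun t ht δ hδ => ?_) (fun s hs δ hδ => ?_)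
  · obtain ⟨K, hK⟩ := hf δ hδ
    refine pressure_lt_top_of_le_add (K := K) (fun x => ?_) ht
    linarith [(abs_le.1 (hK x)).2]
  · obtain ⟨K, hK⟩ := hf δ hδ
    refine pressure_lt_top_of_le_add (K := K) (fun x => ?_) hs
    linarith [(abs_le.1 (hK x)).1]

theorem ttilde_eq_affine_general
    (φ ψ : ShiftSpace → ℝ)
    (hφ : LocHolder φ)
    (hψ : LocHolder ψ) (hψpos : ∀ x, 0 < ψ x)
    (αlim : ℝ)
    (hαlim : Tendsto (fun i : ℕ+ => φ (constSeq i) / (-ψ (constSeq i))) atTop (nhds αlim))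
    (hαlim₀ : 0 < αlim)
    (htinf₁ : (tinfSet ψ).Nonempty) (htinf₂ : BddBelow (tinfSet ψ))
    :
    (∀ q : ℝ, ttilde φ ψ q = -αlim * q + tinfty ψ) ∧ StrictAnti (ttilde φ ψ) := by
  have haffine : ∀ q : ℝ, ttilde φ ψ q = -αlim * q + tinfty ψ := fun q => by
    have hq := (isNegligible_add_mul hφ hψ hψpos hαlim).const_mul q
    rw [add_comm]
    refine sInf_pressure_sub_mul_eq (f := fun x => q * φ x) htinf₁ htinf₂ ?_
    convert hq using 2 with x
    ring
  refine ⟨haffine, fun q₁ q₂ hq => ?_⟩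
  rw [haffine, haffine]
  linarith [mul_lt_mul_of_pos_left hq hαlim₀]

/-- Proposition 2.8: `t̃(q) = -α_lim q + t_∞`, a strictly
decreasing affine function of `q`. -/
theorem ttilde_eq_affine
    (φ ψ : ShiftSpace → ℝ)
    (hφ : LocHolder φ) (hφneg : ∀ x, φ x < 0)
    (hψ : LocHolder ψ) (hψpos : ∀ x, 0 < ψ x)
    (αlim : ℝ)
    (hαlim : Tendsto (fun i : ℕ+ => φ (constSeq i) / (-ψ (constSeq i))) atTop (nhds αlim))
    (hαlim₀ : 0 < αlim)
    (htinf₁ : (tinfSet ψ).Nonempty) (htinf₂ : BddBelow (tinfSet ψ))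
    :
    (∀ q : ℝ, ttilde φ ψ q = -αlim * q + tinfty ψ) ∧ StrictAnti (ttilde φ ψ) :=
  ttilde_eq_affine_general φ ψ hφ hψ hψpos αlim hαlim hαlim₀ htinf₁ htinf₂

end CMS
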